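/- arXiv:2412.15155 — 2 statements merged into one kernel-verified Lean document; each statement's English description precedes it below -/
import Mathlib

section
/- Let 0 < k < n, identify ℝⁿ = ℝᵏ × ℝ^{n−k}, let U ⊆ ℝᵏ be open, φ : U → ℝ^{n−k} be continuously differentiable, Γ = {(z, φ(z)) : z ∈ U} its graph, and K ⊆ Γ a compact set. Then sup_{p ∈ K} |δ(p, r)/r − 1| → 0 as r → 0+, where δ(p, r) = inf_ν dist(p + rν, Γ) and the infimum is taken over all unit normals ν to Γ at p. -/
/-!
Write `p = (z, φ z)` and `q = (w, φ w)`. By the first-order Taylor estimate, which is uniform in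
`z` ranging over the compact projection of `K`, `q - p = (v, Dφ(z) v) + η` with `v = w - z` and
`‖η‖ ≤ ε ‖v‖` as long as `‖v‖ < ρ`. The first summand is tangent, so for a unit normal `ν`,
`‖q - p - r ν‖ ≥ max r ‖v‖ - ε ‖v‖ ≥ (1 - ε) r`; points with `‖v‖ ≥ ρ ≥ 2 r` are at distance
`≥ r` from `p + r ν` anyway. Since `p ∈ Γ` also gives `δ(p, r) ≤ r`, we get
`(1 - ε) r ≤ δ(p, r) ≤ r` for all `r < ρ / 2`, uniformly in `p ∈ K`.
-/

open Metric Set Filter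
open scoped RealInnerProductSpace

noncomputable section

/-- `ℝᵏ` as a Euclidean space. -/
abbrev Ek (k : ℕ) : Type := EuclideanSpace ℝ (Fin k)

/-- `ℝⁿ` identified with `ℝᵏ × ℝ^{n-k}`, with the Euclidean (L²) norm. -/
abbrev Pk (k m : ℕ) : Type := WithLp 2 (Ek k × Ek m)

/-- The identification of the plain product with the L²-product. -/
def emb (k m : ℕ) : Ek k × Ek m → Pk k m := (WithLp.equiv 2 (Ek k × Ek m)).symm

/-- `δ(p, r) = inf_ν dist(p + rν, Γ)`, the infimum being over all unit vectors `ν`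
orthogonal to the tangent space `T` of `Γ` at `p`. -/
def deltaFn (k m : ℕ) (Γ : Set (Pk k m)) (T : Submodule ℝ (Pk k m)) (p : Pk k m) (r : ℝ) : ℝ :=
  sInf {d : ℝ | ∃ ν : Pk k m, ‖ν‖ = 1 ∧ ν ∈ Tᗮ ∧ d = Metric.infDist (p + r • ν) Γ}

theorem ContDiffOn.exists_pos_norm_sub_sub_fderivWithin_le
    {E F : Type*} [NormedAddCommGroup E] [NormedSpace ℝ E] [NormedAddCommGroup F]
    [NormedSpace ℝ F] {U K : Set E} {φ : E → F} (hφ : ContDiffOn ℝ 1 φ U) (hU : IsOpen U)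
    (hK : IsCompact K) (hKU : K ⊆ U) {ε : ℝ} (hε : 0 < ε) :
    ∃ ρ > 0, ∀ z ∈ K, ∀ w ∈ ball z ρ,
      ‖φ w - φ z - fderivWithin ℝ φ U z (w - z)‖ ≤ ε * ‖w - z‖ := by
  set Dφ := fderivWithin ℝ φ U
  have hDφ : ∀ x ∈ K, ContinuousAt Dφ x := fun x hx =>
    (hφ.continuousOn_fderivWithin hU.uniqueDiffOn le_rfl).continuousAt (hU.mem_nhds (hKU hx))
  obtain ⟨η, hη, hDφη⟩ := Metric.mem_uniformity_dist.mp
    (hK.uniformContinuousAt_of_continuousAt Dφ hDφ (Metric.dist_mem_uniformity hε))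
  obtain ⟨δ, hδ, hδU⟩ := hK.exists_thickening_subset_open hU hKU
  refine ⟨min δ η, lt_min hδ hη, fun z hz w hw => ?_⟩
  have hball : ball z (min δ η) ⊆ U :=
    (ball_subset_ball (min_le_left _ _)).trans ((ball_subset_thickening hz _).trans hδU)
  refine (convex_ball z _).norm_image_sub_le_of_norm_hasFDerivWithin_le' (f' := Dφ)
    (fun x hx => ?_) (fun x hx => ?_) (mem_ball_self (lt_min hδ hη)) hw
  · exact ((hφ.differentiableOn one_ne_zero x (hball hx)).hasFDerivWithinAt).mono hball
  · rw [← dist_eq_norm, dist_comm]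
    exact (hDφη (lt_of_lt_of_le (mem_ball'.mp hx) (min_le_right _ _)) hz).le

section Orthogonal

variable {V : Type*} [NormedAddCommGroup V] [InnerProductSpace ℝ V]

theorem max_le_norm_sub_smul_of_mem_orthogonal {T : Submodule ℝ V} {t ν : V} (ht : t ∈ T)
    (hν : ν ∈ Tᗮ) (hν1 : ‖ν‖ = 1) {r : ℝ} (hr : 0 ≤ r) : max r ‖t‖ ≤ ‖t - r • ν‖ := by
  have hsq := norm_sub_sq_eq_norm_sq_add_norm_sq_real
    (Submodule.inner_right_of_mem_orthogonal ht (Tᗮ.smul_mem r hν))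
  rw [norm_smul, hν1, Real.norm_of_nonneg hr, mul_one] at hsq
  have hnn := norm_nonneg (t - r • ν)
  exact max_le (by nlinarith) (by nlinarith [norm_nonneg t])

theorem exists_norm_eq_one_mem_orthogonal [FiniteDimensional ℝ V] {T : Submodule ℝ V}
    (hT : T ≠ ⊤) : ∃ ν : V, ‖ν‖ = 1 ∧ ν ∈ Tᗮ := by
  obtain ⟨v, hv, hv0⟩ :=
    Submodule.exists_mem_ne_zero_of_ne_bot (mt Submodule.orthogonal_eq_bot_iff.mp hT)
  exact ⟨‖v‖⁻¹ • v, norm_smul_inv_norm hv0, Tᗮ.smul_mem _ hv⟩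

end Orthogonal

section Graph

variable {E F : Type*} [NormedAddCommGroup E] [NormedSpace ℝ E]
  [NormedAddCommGroup F] [NormedSpace ℝ F]

def graphMap (D : E →L[ℝ] F) : E →ₗ[ℝ] WithLp 2 (E × F) :=
  (WithLp.linearEquiv 2 ℝ (E × F)).symm.toLinearMap ∘ₗ LinearMap.id.prod (D : E →ₗ[ℝ] F)

theorem graphMap_apply (D : E →L[ℝ] F) (v : E) : graphMap D v = WithLp.toLp 2 (v, D v) := rfl

theorem norm_le_norm_graphMap (D : E →L[ℝ] F) (v : E) : ‖v‖ ≤ ‖graphMap D v‖ :=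
  WithLp.norm_fst_le E (graphMap D v)

theorem span_range_graphMap_basis {ι : Type*} (b : Module.Basis ι ℝ E) (D : E →L[ℝ] F) :
    Submodule.span ℝ (range fun i => graphMap D (b i)) = LinearMap.range (graphMap D) := by
  rw [range_comp' (graphMap D) b, ← Submodule.map_span, b.span_eq, LinearMap.range_eq_map]

theorem range_graphMap_ne_top [FiniteDimensional ℝ E] [FiniteDimensional ℝ F] [Nontrivial F]
    (D : E →L[ℝ] F) : LinearMap.range (graphMap D) ≠ ⊤ := by
  intro htop
  have hle := LinearMap.finrank_range_le (graphMap D)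
  rw [htop, finrank_top, (WithLp.linearEquiv 2 ℝ (E × F)).finrank_eq, Module.finrank_prod] at hle
  have := Module.finrank_pos (R := ℝ) (M := F)
  omega

theorem toLp_sub_toLp_eq_graphMap_add (φ : E → F) (D : E →L[ℝ] F) (z w : E) :
    WithLp.toLp 2 (w, φ w) - WithLp.toLp 2 (z, φ z) =
      graphMap D (w - z) + WithLp.toLp 2 (0, φ w - φ z - D (w - z)) := by
  rw [graphMap_apply, ← WithLp.toLp_sub, ← WithLp.toLp_add]
  congr 1
  ext <;> simp

end Graph

theorem one_sub_mul_le_dist_graph {E F : Type*} [NormedAddCommGroup E] [InnerProductSpace ℝ E]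
    [NormedAddCommGroup F] [InnerProductSpace ℝ F] {φ : E → F} {D : E →L[ℝ] F} {z : E} {ε ρ r : ℝ}
    (hε₀ : 0 ≤ ε) (hε₁ : ε ≤ 1) (hr : 0 ≤ r) (hrρ : 2 * r ≤ ρ)
    (hφ : ∀ w ∈ ball z ρ, ‖φ w - φ z - D (w - z)‖ ≤ ε * ‖w - z‖)
    {ν : WithLp 2 (E × F)} (hν : ν ∈ (LinearMap.range (graphMap D))ᗮ) (hν1 : ‖ν‖ = 1) (w : E) :
    (1 - ε) * r ≤ dist (WithLp.toLp 2 (z, φ z) + r • ν) (WithLp.toLp 2 (w, φ w)) := by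
  by_cases hw : ‖w - z‖ < ρ
  · set t := graphMap D (w - z)
    set η : WithLp 2 (E × F) := WithLp.toLp 2 (0, φ w - φ z - D (w - z))
    have hdist : dist (WithLp.toLp 2 (z, φ z) + r • ν) (WithLp.toLp 2 (w, φ w)) =
        ‖(t - r • ν) + η‖ := by
      rw [dist_comm, dist_eq_norm, sub_add_eq_sub_sub, toLp_sub_toLp_eq_graphMap_add φ D]
      congr 1
      abel
    have hη : ‖η‖ ≤ ε * ‖t‖ := by
      rw [WithLp.norm_toLp_snd]
      exact (hφ w (by rwa [mem_ball, dist_eq_norm])).trans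
        (mul_le_mul_of_nonneg_left (norm_le_norm_graphMap D _) hε₀)
    have hmax :=
      max_le_norm_sub_smul_of_mem_orthogonal (LinearMap.mem_range_self _ (w - z)) hν hν1 hr
    have htri : ‖t - r • ν‖ - ‖η‖ ≤ ‖(t - r • ν) + η‖ := by
      simpa using norm_sub_le ((t - r • ν) + η) η
    rw [hdist]
    nlinarith [mul_le_mul_of_nonneg_left (le_max_right r ‖t‖) hε₀,
      mul_le_mul_of_nonneg_left (le_max_left r ‖t‖) (sub_nonneg.mpr hε₁)]
  · have hfar : ‖w - z‖ ≤ dist (WithLp.toLp 2 (w, φ w)) (WithLp.toLp 2 (z, φ z)) := by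
      simpa only [WithLp.toLp_fst, dist_eq_norm w z] using
        WithLp.dist_fst_le (WithLp.toLp 2 (w, φ w)) (WithLp.toLp 2 (z, φ z))
    have htri := dist_triangle (WithLp.toLp 2 (w, φ w)) (WithLp.toLp 2 (z, φ z) + r • ν)
      (WithLp.toLp 2 (z, φ z))
    rw [dist_self_add_left, norm_smul, hν1, Real.norm_of_nonneg hr, mul_one,
      dist_comm (WithLp.toLp 2 (w, φ w)) (WithLp.toLp 2 (z, φ z) + r • ν)] at htri
    nlinarith


theorem emb_eq_toLp (k m : ℕ) : emb k m = WithLp.toLp 2 := rfl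

section Delta

variable {k m : ℕ} {Γ : Set (Pk k m)} {T : Submodule ℝ (Pk k m)} {p : Pk k m} {r : ℝ}

theorem deltaFn_le {ν : Pk k m} (hν1 : ‖ν‖ = 1) (hν : ν ∈ Tᗮ) (hp : p ∈ Γ) (hr : 0 ≤ r) :
    deltaFn k m Γ T p r ≤ r := by
  have hmem : infDist (p + r • ν) Γ ∈
      {d : ℝ | ∃ ν : Pk k m, ‖ν‖ = 1 ∧ ν ∈ Tᗮ ∧ d = infDist (p + r • ν) Γ} := ⟨ν, hν1, hν, rfl⟩
  refine (csInf_le ⟨0, ?_⟩ hmem).trans ((infDist_le_dist_of_mem hp).trans ?_)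
  · rintro _ ⟨_, _, _, rfl⟩
    exact infDist_nonneg
  · rw [dist_comm, dist_self_add_right, norm_smul, hν1, Real.norm_of_nonneg hr, mul_one]

theorem le_deltaFn {c : ℝ} (hΓ : Γ.Nonempty) (hT : ∃ ν : Pk k m, ‖ν‖ = 1 ∧ ν ∈ Tᗮ)
    (h : ∀ ν : Pk k m, ‖ν‖ = 1 → ν ∈ Tᗮ → ∀ q ∈ Γ, c ≤ dist (p + r • ν) q) :
    c ≤ deltaFn k m Γ T p r := by
  obtain ⟨ν₀, hν₀1, hν₀⟩ := hT
  unfold deltaFn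
  refine le_csInf ⟨_, ν₀, hν₀1, hν₀, rfl⟩ ?_
  rintro _ ⟨ν, hν1, hν, rfl⟩
  exact (le_infDist hΓ).2 (h ν hν1 hν)

theorem abs_deltaFn_div_sub_one_le {ν₀ : Pk k m} {ε : ℝ} (hν₀1 : ‖ν₀‖ = 1) (hν₀ : ν₀ ∈ Tᗮ)
    (hp : p ∈ Γ) (hr : 0 < r)
    (h : ∀ ν : Pk k m, ‖ν‖ = 1 → ν ∈ Tᗮ → ∀ q ∈ Γ, (1 - ε) * r ≤ dist (p + r • ν) q) :
    |deltaFn k m Γ T p r / r - 1| ≤ ε := by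
  have hupper := (div_le_one hr).mpr (deltaFn_le hν₀1 hν₀ hp hr.le)
  have hlower := (le_div_iff₀ hr).mpr (le_deltaFn ⟨p, hp⟩ ⟨ν₀, hν₀1, hν₀⟩ h)
  rw [abs_le]
  constructor <;> linarith

end Delta

theorem statement3_general
    (k n : ℕ) (hkn : k < n)
    (U : Set (Ek k)) (hU : IsOpen U)
    (φ : Ek k → Ek (n - k)) (hφ : ContDiffOn ℝ 1 φ U)
    (Γ : Set (Pk k (n - k))) (hΓ : Γ = (fun z => emb k (n - k) (z, φ z)) '' U)
    (T : Ek k → Submodule ℝ (Pk k (n - k)))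
    (hT : ∀ z ∈ U, T z = Submodule.span ℝ (Set.range fun i : Fin k =>
      emb k (n - k) (EuclideanSpace.single i 1,
        fderivWithin ℝ φ U z (EuclideanSpace.single i 1))))
    (K : Set (Pk k (n - k))) (hK : IsCompact K) (hKΓ : K ⊆ Γ) :
    ∀ ε : ℝ, 0 < ε → ∃ r₀ : ℝ, 0 < r₀ ∧ ∀ r : ℝ, 0 < r → r < r₀ →
      ∀ z ∈ U, emb k (n - k) (z, φ z) ∈ K →
        |deltaFn k (n - k) Γ (T z) (emb k (n - k) (z, φ z)) r / r - 1| < ε := by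
  intro ε hε
  have : NeZero (n - k) := ⟨by omega⟩
  obtain ⟨ε', hε'0, hε'ε, hε'1⟩ : ∃ ε' : ℝ, 0 < ε' ∧ ε' < ε ∧ ε' ≤ 1 :=
    ⟨min ε 1 / 2, by positivity, by linarith [min_le_left ε 1], by linarith [min_le_right ε 1]⟩
  set K₀ := (fun p : Pk k (n - k) => (WithLp.ofLp p).1) '' K
  have hK₀ : IsCompact K₀ := hK.image (continuous_fst.comp (WithLp.prod_continuous_ofLp _ _ _))
  have hK₀U : K₀ ⊆ U := by
    rintro _ ⟨_, hp, rfl⟩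
    obtain ⟨w, hw, rfl⟩ := hΓ ▸ hKΓ hp
    exact hw
  obtain ⟨ρ, hρ, hTaylor⟩ := hφ.exists_pos_norm_sub_sub_fderivWithin_le hU hK₀ hK₀U hε'0
  refine ⟨ρ / 2, half_pos hρ, fun r hr hrρ z hz hzK => ?_⟩
  have hTz : T z = LinearMap.range (graphMap (fderivWithin ℝ φ U z)) := by
    rw [hT z hz, ← span_range_graphMap_basis (EuclideanSpace.basisFun (Fin k) ℝ).toBasis]
    simp [graphMap_apply, emb_eq_toLp]
  have hp : emb k (n - k) (z, φ z) ∈ Γ := hΓ ▸ mem_image_of_mem _ hz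
  obtain ⟨ν₀, hν₀1, hν₀⟩ := exists_norm_eq_one_mem_orthogonal (hTz ▸ range_graphMap_ne_top _)
  refine (abs_deltaFn_div_sub_one_le hν₀1 hν₀ hp hr fun ν hν1 hν q hq => ?_).trans_lt hε'ε
  obtain ⟨w, -, rfl⟩ := hΓ ▸ hq
  rw [hTz] at hν
  exact one_sub_mul_le_dist_graph hε'0.le hε'1 hr.le (by linarith) (hTaylor z ⟨_, hzK, rfl⟩)
    hν hν1 w

/-- with `φ : U → ℝ^{n-k}` continuously differentiable on the open set `U`,
`Γ` the graph of `φ` over `U`, `T z` the tangent space of `Γ` at `p = (z, φ z)` (the span of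
the vectors `ē_i = (e_i, ∂φ/∂xⁱ(z))`), and `K ⊆ Γ` compact:
`sup_{p ∈ K} |δ(p, r)/r − 1| → 0` as `r → 0+`; that is, for every `ε > 0` there is `r₀ > 0`
such that `|δ(p, r)/r − 1| < ε` for all `0 < r < r₀` and all `p ∈ K`. -/
theorem statement3
    (k n : ℕ) (hk : 0 < k) (hkn : k < n)
    (U : Set (Ek k)) (hU : IsOpen U)
    (φ : Ek k → Ek (n - k)) (hφ : ContDiffOn ℝ 1 φ U)
    (Γ : Set (Pk k (n - k))) (hΓ : Γ = (fun z => emb k (n - k) (z, φ z)) '' U)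
    (T : Ek k → Submodule ℝ (Pk k (n - k)))
    (hT : ∀ z ∈ U, T z = Submodule.span ℝ (Set.range fun i : Fin k =>
      emb k (n - k) (EuclideanSpace.single i 1,
        fderivWithin ℝ φ U z (EuclideanSpace.single i 1))))
    (K : Set (Pk k (n - k))) (hK : IsCompact K) (hKΓ : K ⊆ Γ) :
    ∀ ε : ℝ, 0 < ε → ∃ r₀ : ℝ, 0 < r₀ ∧ ∀ r : ℝ, 0 < r → r < r₀ →
      ∀ z ∈ U, emb k (n - k) (z, φ z) ∈ K →
        |deltaFn k (n - k) Γ (T z) (emb k (n - k) (z, φ z)) r / r - 1| < ε :=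
  statement3_general k n hkn U hU φ hφ Γ hΓ T hT K hK hKΓ
end
end

section
/- Fix an integer m ≥ 2, a real λ > (m−1)²/4, β = √(λ − (m−1)²/4), ψ(t) = sinh(t)^{−(m−1)/2} e^{iβt}, and for R > 0 let F_R(t) = ψ(t) sin²((2π/R)(t − R/2)) for t > 0. Then for every R₀ > 0 there exists a constant C > 0, depending only on m, λ and R₀, such that for all R > R₀: ∫_{R/2}^{R} |F_R''(t)|² sinh^{m−1}(t) dt ≤ C ∫_{R/2}^{R} |F_R(t)|² sinh^{m−1}(t) dt. -/
/-
Since `‖ψ t‖² sinh^{m-1} t = 1`, the right-hand side is the integral of `sin⁴` over half a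
period, namely `3R/16`. Writing `ψ' = ψ L` with `L = r coth t + iβ`, the second derivative of
`F_R` is `ψ` times a combination of `L² + L'`, `L` and the first two derivatives of
`sin²(a (t - R/2))`, `a = 2π/R`. For `t ≥ R₀/2` and `a ≤ 2π/R₀` these are bounded by a constant
`K`, so the left-hand side is at most `K² R/2`.
-/

open Filter Set
open scoped Real Topology Interval

noncomputable section

theorem deriv_deriv_mul_of_hasDerivAt {𝕜 𝔸 : Type*} [NontriviallyNormedField 𝕜] [NormedRing 𝔸]
    [NormedAlgebra 𝕜 𝔸] {f f' g g' : 𝕜 → 𝔸} {f'' g'' : 𝔸} {x : 𝕜}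
    (hf : ∀ᶠ y in 𝓝 x, HasDerivAt f (f' y) y) (hf' : HasDerivAt f' f'' x)
    (hg : ∀ᶠ y in 𝓝 x, HasDerivAt g (g' y) y) (hg' : HasDerivAt g' g'' x) :
    deriv (deriv fun y => f y * g y) x = f'' * g x + 2 * (f' x * g' x) + f x * g'' := by
  have hd : deriv (fun y => f y * g y) =ᶠ[𝓝 x] fun y => f' y * g y + f y * g' y := by
    filter_upwards [hf, hg] with y hfy hgy
    exact (hfy.fun_mul hgy).deriv
  rw [hd.deriv_eq, ((hf'.fun_mul hg.self_of_nhds).fun_add (hf.self_of_nhds.fun_mul hg')).deriv]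
  noncomm_ring

section
variable {a c t : ℝ}

theorem hasDerivAt_sin_mul_sub_sq :
    HasDerivAt (fun t => Real.sin (a * (t - c)) ^ 2) (a * Real.sin (2 * (a * (t - c)))) t := by
  have hθ : HasDerivAt (fun t => a * (t - c)) a t := by
    simpa using ((hasDerivAt_id t).sub_const c).const_mul a
  refine ((Real.hasDerivAt_sin _).comp t hθ).pow 2 |>.congr_deriv ?_
  rw [Function.comp_apply, Real.sin_two_mul]
  ring

theorem hasDerivAt_mul_sin_two_mul_mul_sub :
    HasDerivAt (fun t => a * Real.sin (2 * (a * (t - c))))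
      (2 * a ^ 2 * Real.cos (2 * (a * (t - c)))) t := by
  have hθ : HasDerivAt (fun t => 2 * (a * (t - c))) (2 * a) t := by
    simpa using (((hasDerivAt_id t).sub_const c).const_mul a).const_mul 2
  refine ((Real.hasDerivAt_sin _).comp t hθ).const_mul a |>.congr_deriv ?_
  ring

end

theorem integral_sin_mul_sub_pow_four (a c : ℝ) :
    ∫ t in c..c + π / a, Real.sin (a * (t - c)) ^ 4 = 3 * π / (8 * a) := by
  rcases eq_or_ne a 0 with rfl | ha
  · simp
  rw [intervalIntegral.integral_comp_sub_right (fun s => Real.sin (a * s) ^ 4),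
    intervalIntegral.integral_comp_mul_left (fun s => Real.sin s ^ 4) ha]
  have h4 := integral_sin_pow_even (n := 2)
  simp only [Finset.prod_range_succ, Finset.prod_range_zero] at h4
  norm_num at h4
  rw [sub_self, add_sub_cancel_left, mul_zero, mul_div_cancel₀ _ ha, h4, smul_eq_mul]
  field_simp

theorem rpow_neg_half_sq_mul_pow {x : ℝ} (hx : 0 < x) (k : ℕ) :
    (x ^ (-((k : ℝ) / 2))) ^ 2 * x ^ k = 1 := by
  rw [← Real.rpow_mul_natCast hx.le, neg_mul, Real.rpow_neg hx.le]
  norm_num [Real.rpow_natCast, hx.ne']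

theorem cosh_div_sinh_le {h t : ℝ} (hh : 0 < h) (hht : h ≤ t) :
    Real.cosh t / Real.sinh t ≤ Real.cosh h / Real.sinh h := by
  rw [div_le_div_iff₀ (Real.sinh_pos_iff.2 (hh.trans_le hht)) (Real.sinh_pos_iff.2 hh)]
  have := Real.sinh_nonneg_iff.2 (sub_nonneg.2 hht)
  rw [Real.sinh_sub] at this
  linarith

def sinhWave (r β t : ℝ) : ℂ :=
  ((Real.sinh t ^ r : ℝ) : ℂ) * Complex.exp (Complex.I * β * t)

def sinhWaveLogDeriv (r β t : ℝ) : ℂ :=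
  ((r * (Real.cosh t / Real.sinh t) : ℝ) : ℂ) + Complex.I * β

section
variable {r β a c t : ℝ}

theorem norm_sinhWave (ht : 0 ≤ t) : ‖sinhWave r β t‖ = Real.sinh t ^ r := by
  rw [sinhWave, norm_mul, Complex.norm_exp, Complex.norm_real, Real.norm_of_nonneg
    (Real.rpow_nonneg (Real.sinh_nonneg_iff.2 ht) r)]
  simp

theorem hasDerivAt_sinhWave (ht : 0 < t) :
    HasDerivAt (sinhWave r β) (sinhWave r β t * sinhWaveLogDeriv r β t) t := by
  have hsinh := Real.sinh_pos_iff.2 ht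
  have hpow : HasDerivAt (fun t => Real.sinh t ^ r)
      (Real.cosh t * r * Real.sinh t ^ (r - 1)) t :=
    (Real.hasDerivAt_sinh t).rpow_const (Or.inl hsinh.ne')
  have hexp : HasDerivAt (fun t : ℝ => Complex.exp (Complex.I * β * t))
      (Complex.exp (Complex.I * β * t) * (Complex.I * β)) t := by
    simpa using ((Complex.ofRealCLM.hasDerivAt (x := t)).const_mul (Complex.I * β)).cexp
  refine (hpow.ofReal_comp.fun_mul hexp).congr_deriv ?_
  rw [Real.rpow_sub_one hsinh.ne', sinhWave, sinhWaveLogDeriv]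
  push_cast
  ring

theorem hasDerivAt_sinhWaveLogDeriv (ht : 0 < t) :
    HasDerivAt (sinhWaveLogDeriv r β) ((-r / Real.sinh t ^ 2 : ℝ) : ℂ) t := by
  have hsinh := (Real.sinh_pos_iff.2 ht).ne'
  have hcoth : HasDerivAt (fun t => r * (Real.cosh t / Real.sinh t))
      (-r / Real.sinh t ^ 2) t := by
    refine (((Real.hasDerivAt_cosh t).div (Real.hasDerivAt_sinh t) hsinh).const_mul r
      ).congr_deriv ?_
    field_simp
    linear_combination (-r) * Real.cosh_sq_sub_sinh_sq t
  exact hcoth.ofReal_comp.add_const _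

theorem norm_sinhWaveLogDeriv_le {h : ℝ} (hh : 0 < h) (hht : h ≤ t) :
    ‖sinhWaveLogDeriv r β t‖ ≤ |r| * (Real.cosh h / Real.sinh h) + |β| := by
  have hcoth : 0 ≤ Real.cosh t / Real.sinh t :=
    div_nonneg (Real.cosh_pos t).le (Real.sinh_nonneg_iff.2 (hh.le.trans hht))
  calc ‖sinhWaveLogDeriv r β t‖
      ≤ |r * (Real.cosh t / Real.sinh t)| + |β| := by
        refine (norm_add_le _ _).trans_eq ?_
        rw [Complex.norm_real, Real.norm_eq_abs, norm_mul, Complex.norm_I, one_mul,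
          Complex.norm_real, Real.norm_eq_abs]
    _ ≤ |r| * (Real.cosh h / Real.sinh h) + |β| := by
        rw [abs_mul, abs_of_nonneg hcoth]
        gcongr ?_ + _
        exact mul_le_mul_of_nonneg_left (cosh_div_sinh_le hh hht) (abs_nonneg r)

theorem deriv_deriv_sinhWave_mul_sin_sq (ht : 0 < t) :
    deriv (deriv fun x => sinhWave r β x * ((Real.sin (a * (x - c)) ^ 2 : ℝ) : ℂ)) t =
      sinhWave r β t *
        ((sinhWaveLogDeriv r β t ^ 2 + ((-r / Real.sinh t ^ 2 : ℝ) : ℂ)) *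
            ((Real.sin (a * (t - c)) ^ 2 : ℝ) : ℂ) +
          2 * sinhWaveLogDeriv r β t * ((a * Real.sin (2 * (a * (t - c))) : ℝ) : ℂ) +
          ((2 * a ^ 2 * Real.cos (2 * (a * (t - c))) : ℝ) : ℂ)) := by
  have hpos : ∀ᶠ x in 𝓝 t, 0 < x := Ioi_mem_nhds ht
  rw [deriv_deriv_mul_of_hasDerivAt (hpos.mono fun x hx => hasDerivAt_sinhWave hx)
    ((hasDerivAt_sinhWave ht).fun_mul (hasDerivAt_sinhWaveLogDeriv ht))
    (Eventually.of_forall fun x => hasDerivAt_sin_mul_sub_sq.ofReal_comp)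
    hasDerivAt_mul_sin_two_mul_mul_sub.ofReal_comp]
  ring

end

theorem exists_norm_deriv_deriv_sinhWave_mul_sin_sq_le (r β : ℝ) {h : ℝ} (hh : 0 < h)
    (a₀ : ℝ) :
    ∃ K, ∀ a c t, |a| ≤ a₀ → h ≤ t →
      ‖deriv (deriv fun x => sinhWave r β x * ((Real.sin (a * (x - c)) ^ 2 : ℝ) : ℂ)) t‖ ≤
        K * Real.sinh t ^ r := by
  set A := |r| * (Real.cosh h / Real.sinh h) + |β|
  set B := |r| / Real.sinh h ^ 2
  refine ⟨(A ^ 2 + B) * 1 + 2 * (A * a₀) + 2 * a₀ ^ 2, fun a c t ha hht => ?_⟩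
  have ht : 0 < t := hh.trans_le hht
  have hA : ‖sinhWaveLogDeriv r β t‖ ≤ A := norm_sinhWaveLogDeriv_le hh hht
  have hB : ‖((-r / Real.sinh t ^ 2 : ℝ) : ℂ)‖ ≤ B := by
    have hsinh := Real.sinh_pos_iff.2 hh
    rw [Complex.norm_real, Real.norm_eq_abs, abs_div, abs_neg,
      abs_of_nonneg (sq_nonneg (Real.sinh t))]
    exact div_le_div_of_nonneg_left (abs_nonneg r) (pow_pos hsinh 2)
      (pow_le_pow_left₀ hsinh.le (Real.sinh_le_sinh.2 hht) 2)
  have hu : ‖((Real.sin (a * (t - c)) ^ 2 : ℝ) : ℂ)‖ ≤ 1 := by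
    rw [Complex.norm_real, Real.norm_of_nonneg (sq_nonneg _)]
    exact Real.sin_sq_le_one _
  have hu' : ‖((a * Real.sin (2 * (a * (t - c))) : ℝ) : ℂ)‖ ≤ a₀ := by
    rw [Complex.norm_real, Real.norm_eq_abs, abs_mul]
    exact (mul_le_of_le_one_right (abs_nonneg a) (Real.abs_sin_le_one _)).trans ha
  have hu'' : ‖((2 * a ^ 2 * Real.cos (2 * (a * (t - c))) : ℝ) : ℂ)‖ ≤ 2 * a₀ ^ 2 := by
    rw [Complex.norm_real, Real.norm_eq_abs, abs_mul, abs_mul, abs_two, abs_pow]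
    refine (mul_le_of_le_one_right (by positivity) (Real.abs_cos_le_one _)).trans ?_
    gcongr
  rw [deriv_deriv_sinhWave_mul_sin_sq ht, norm_mul, norm_sinhWave ht.le, mul_comm]
  gcongr
  calc _ ≤ ‖(sinhWaveLogDeriv r β t ^ 2 + ((-r / Real.sinh t ^ 2 : ℝ) : ℂ))‖ *
            ‖((Real.sin (a * (t - c)) ^ 2 : ℝ) : ℂ)‖ +
          2 * (‖sinhWaveLogDeriv r β t‖ * ‖((a * Real.sin (2 * (a * (t - c))) : ℝ) : ℂ)‖) +
          ‖((2 * a ^ 2 * Real.cos (2 * (a * (t - c))) : ℝ) : ℂ)‖ := by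
        refine norm_add₃_le.trans ?_
        simp only [norm_mul, Complex.norm_ofNat, mul_assoc, le_refl]
    _ ≤ (A ^ 2 + B) * 1 + 2 * (A * a₀) + 2 * a₀ ^ 2 := by
        gcongr
        exact (norm_add_le _ _).trans (by rw [norm_pow]; gcongr)

theorem integral_norm_sq_mul_sinh_pow_le {E : Type*} [NormedAddCommGroup E] {f : ℝ → E}
    {k : ℕ} {K a b : ℝ} (ha : 0 ≤ a) (hab : a ≤ b)
    (hf : ∀ t ∈ Ioc a b, ‖f t‖ ≤ K * Real.sinh t ^ (-((k : ℝ) / 2))) :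
    ∫ t in a..b, ‖f t‖ ^ 2 * Real.sinh t ^ k ≤ K ^ 2 * (b - a) := by
  have hpt : ∀ t ∈ Ι a b, ‖‖f t‖ ^ 2 * Real.sinh t ^ k‖ ≤ K ^ 2 := by
    intro t ht
    rw [uIoc_of_le hab] at ht
    have hsinh : 0 < Real.sinh t := Real.sinh_pos_iff.2 (ha.trans_lt ht.1)
    rw [Real.norm_of_nonneg (by positivity)]
    calc ‖f t‖ ^ 2 * Real.sinh t ^ k
        ≤ (K * Real.sinh t ^ (-((k : ℝ) / 2))) ^ 2 * Real.sinh t ^ k := by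
          gcongr
          exact hf t ht
      _ = K ^ 2 := by rw [mul_pow, mul_assoc, rpow_neg_half_sq_mul_pow hsinh, mul_one]
  calc _ ≤ ‖∫ t in a..b, ‖f t‖ ^ 2 * Real.sinh t ^ k‖ := Real.le_norm_self _
    _ ≤ K ^ 2 * |b - a| := intervalIntegral.norm_integral_le_of_norm_le_const hpt
    _ = K ^ 2 * (b - a) := by rw [abs_of_nonneg (sub_nonneg.2 hab)]

theorem integral_norm_sinhWave_mul_sq_mul_sinh_pow {k : ℕ} {β a b : ℝ} {u : ℝ → ℝ}
    (ha : 0 < a) (hab : a ≤ b) :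
    ∫ t in a..b, ‖sinhWave (-((k : ℝ) / 2)) β t * (u t : ℂ)‖ ^ 2 * Real.sinh t ^ k =
      ∫ t in a..b, u t ^ 2 := by
  refine intervalIntegral.integral_congr fun t ht => ?_
  rw [uIcc_of_le hab] at ht
  have ht : 0 < t := ha.trans_le ht.1
  rw [norm_mul, norm_sinhWave ht.le, Complex.norm_real, Real.norm_eq_abs, mul_pow, sq_abs,
    mul_right_comm, rpow_neg_half_sq_mul_pow (Real.sinh_pos_iff.2 ht), one_mul]

theorem statement13_general
    (m : ℕ) (hm : 2 ≤ m)
    (β : ℝ)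
    (ψ : ℝ → ℂ)
    (hψ : ∀ t : ℝ, ψ t =
      ((Real.sinh t ^ (-(((m : ℝ) - 1) / 2)) : ℝ) : ℂ) * Complex.exp (Complex.I * β * t))
    (F : ℝ → ℝ → ℂ)
    (hF : ∀ R t : ℝ, F R t = ψ t * ((Real.sin (2 * π / R * (t - R / 2)) ^ 2 : ℝ) : ℂ)) :
    ∀ R₀ : ℝ, 0 < R₀ → ∃ C : ℝ, 0 < C ∧ ∀ R : ℝ, R₀ < R →
      (∫ t in (R / 2)..R, ‖deriv (deriv (F R)) t‖ ^ 2 * Real.sinh t ^ (m - 1))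
        ≤ C * ∫ t in (R / 2)..R, ‖F R t‖ ^ 2 * Real.sinh t ^ (m - 1) := by
  obtain ⟨k, rfl⟩ : ∃ k, m = k + 1 := ⟨m - 1, by omega⟩
  have hr : -((((k + 1 : ℕ) : ℝ) - 1) / 2) = -((k : ℝ) / 2) := by push_cast; ring
  simp only [hr, Nat.add_sub_cancel] at hψ ⊢
  have hFR : ∀ R, F R = fun t => sinhWave (-((k : ℝ) / 2)) β t *
      ((Real.sin (2 * π / R * (t - R / 2)) ^ 2 : ℝ) : ℂ) := fun R => by
    ext t; rw [hF, hψ, sinhWave]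
  intro R₀ hR₀
  obtain ⟨K, hK⟩ := exists_norm_deriv_deriv_sinhWave_mul_sin_sq_le (-((k : ℝ) / 2)) β
    (half_pos hR₀) (2 * π / R₀)
  refine ⟨8 * K ^ 2 / 3 + 1, by positivity, fun R hR => ?_⟩
  have hR0 : 0 < R := hR₀.trans hR
  have hlhs : (∫ t in (R / 2)..R, ‖deriv (deriv (F R)) t‖ ^ 2 * Real.sinh t ^ k)
      ≤ K ^ 2 * (R - R / 2) := by
    refine integral_norm_sq_mul_sinh_pow_le (by positivity) (by linarith) fun t ht => ?_
    rw [hFR]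
    exact hK _ _ t (by rw [abs_of_pos (by positivity)]; gcongr) (by linarith [ht.1])
  have hrhs : (∫ t in (R / 2)..R, ‖F R t‖ ^ 2 * Real.sinh t ^ k) = 3 * R / 16 := by
    have hsin4 := integral_sin_mul_sub_pow_four (2 * π / R) (R / 2)
    rw [show R / 2 + π / (2 * π / R) = R by field_simp; ring] at hsin4
    rw [hFR, integral_norm_sinhWave_mul_sq_mul_sinh_pow (by positivity) (by linarith)]
    simp only [← pow_mul]
    rw [hsin4]
    field_simp
    ring
  rw [hrhs]
  nlinarith [sq_nonneg K]

/-- for an integer `m ≥ 2`, a real `λ > (m−1)²/4`, `β = √(λ − (m−1)²/4)`,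
`ψ(t) = sinh(t)^{−(m−1)/2} e^{iβt}` and `F_R(t) = ψ(t) sin²((2π/R)(t − R/2))`: for every
`R₀ > 0` there is `C > 0` (depending only on `m`, `λ`, `R₀`) such that for all `R > R₀`,
`∫_{R/2}^R |F_R''|² sinh^{m−1} ≤ C ∫_{R/2}^R |F_R|² sinh^{m−1}`. -/
theorem statement13
    (m : ℕ) (hm : 2 ≤ m) (lam : ℝ) (hlam : ((m : ℝ) - 1) ^ 2 / 4 < lam)
    (β : ℝ) (hβ : β = Real.sqrt (lam - ((m : ℝ) - 1) ^ 2 / 4))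
    (ψ : ℝ → ℂ)
    (hψ : ∀ t : ℝ, ψ t =
      ((Real.sinh t ^ (-(((m : ℝ) - 1) / 2)) : ℝ) : ℂ) * Complex.exp (Complex.I * β * t))
    (F : ℝ → ℝ → ℂ)
    (hF : ∀ R t : ℝ, F R t = ψ t * ((Real.sin (2 * π / R * (t - R / 2)) ^ 2 : ℝ) : ℂ)) :
    ∀ R₀ : ℝ, 0 < R₀ → ∃ C : ℝ, 0 < C ∧ ∀ R : ℝ, R₀ < R →
      (∫ t in (R / 2)..R, ‖deriv (deriv (F R)) t‖ ^ 2 * Real.sinh t ^ (m - 1))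
        ≤ C * ∫ t in (R / 2)..R, ‖F R t‖ ^ 2 * Real.sinh t ^ (m - 1) :=
  statement13_general m hm β ψ hψ F hF
end
end
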